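/- arXiv:1307.4067 — 2 statements merged into one kernel-verified Lean document; each statement's English description precedes it below -/
import Mathlib

section
/- Let N ≥ 5 be an integer and let A, B > 0. Define Ψ : (0,∞) × ℝ^N → ℝ by Ψ(d, τ) := A (2|τ|² + N)(1 + |τ|²)^{−(N−2)} d^{−(N−2)} + B d^{N−4}. Set d* := ( N(N−2)A / ((N−4)B) )^{1/(2(N−3))}. Then (d*, 0) is a critical point of Ψ, i.e. the gradient of Ψ vanishes at (d*, 0); this critical point is nondegenerate, i.e. the Hessian matrix of Ψ at (d*, 0) is invertible; and it is of saddle type: the second derivative of Ψ in the d-direction at (d*, 0) is strictly positive, while for each i = 1,…,N the second derivative in the τ_i-direction at (d*, 0) is strictly negative, and all mixed second derivatives between d and the τ_i vanish at (d*, 0). -/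
/-!
`Ψ(d, τ) = g(|τ|²) u(d) + v(d)` with `g(s) = A(2s + N)(1 + s)^{-(N-2)}`, `u(d) = d^{-(N-2)}` and
`v(d) = B d^{N-4}`. Since `τ` enters only through `|τ|²`, at `τ = 0` the gradient is
`(g(0) u'(d) + v'(d), 0)`, the mixed second derivatives vanish and the Hessian is
`diag(g(0) u'' + v'', 2 g'(0) u, …, 2 g'(0) u)`. The radial part `A N d^{-(N-2)} + B d^{N-4}` has
`d*` as its critical point, and for `N ≥ 5` both of its terms are convex, while
`g'(0) = A (2 - N(N-2)) < 0`.
-/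

open scoped ENNReal
open MeasureTheory Filter Metric Set

noncomputable section

abbrev Euc (N : ℕ) := EuclideanSpace ℝ (Fin N)

/-- The Laplacian, defined pointwise as the sum of second derivatives along
the coordinate directions. -/
def lap {N : ℕ} (f : Euc N → ℝ) (x : Euc N) : ℝ :=
  ∑ i : Fin N, iteratedDeriv 2 (fun t : ℝ => f (x + t • EuclideanSpace.single i (1 : ℝ))) 0

/-- The bi-Laplacian `Δ²`. -/
def bilap {N : ℕ} (f : Euc N → ℝ) : Euc N → ℝ := lap (lap f)

/-- The normalizing constant `α_N = (N(N-4)(N-2)(N+2))^((N-4)/8)`. -/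
def alphaN (N : ℕ) : ℝ :=
  ((N : ℝ) * ((N : ℝ) - 4) * ((N : ℝ) - 2) * ((N : ℝ) + 2)) ^ (((N : ℝ) - 4) / 8)

/-- The critical exponent `p = (N+4)/(N-4)`. -/
def critExp (N : ℕ) : ℝ := ((N : ℝ) + 4) / ((N : ℝ) - 4)

/-- The concentration exponent `σ = (N-2)/(2(N-3))`. -/
def sigmaN (N : ℕ) : ℝ := ((N : ℝ) - 2) / (2 * ((N : ℝ) - 3))

/-- The standard bubble `U_{μ,ξ}(x) = α_N (μ/(μ² + |x-ξ|²))^((N-4)/2)`. -/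
def bubble (N : ℕ) (μ : ℝ) (ξ x : Euc N) : ℝ :=
  alphaN N * (μ / (μ ^ 2 + ‖x - ξ‖ ^ 2)) ^ (((N : ℝ) - 4) / 2)

/-- `P` solves the Navier problem `Δ²P = g` in `D`, `P = ΔP = 0` on `∂D`:
`P` is C⁴ on `D`, `Δ²P = g` pointwise in `D`, and `P` and `ΔP` extend continuously
to the closure of `D` with the extensions vanishing on the boundary. -/
def NavierSolves {N : ℕ} (D : Set (Euc N)) (P g : Euc N → ℝ) : Prop :=
  ContDiffOn ℝ 4 P D ∧ (∀ x ∈ D, bilap P x = g x) ∧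
    (∃ Pb : Euc N → ℝ, ContinuousOn Pb (closure D) ∧ (∀ x ∈ D, Pb x = P x) ∧
      ∀ x ∈ frontier D, Pb x = 0) ∧
    (∃ Qb : Euc N → ℝ, ContinuousOn Qb (closure D) ∧ (∀ x ∈ D, Qb x = lap P x) ∧
      ∀ x ∈ frontier D, Qb x = 0)

/-- `Ω` has smooth boundary: near every boundary point, `Ω` is the sublevel set of a
smooth function with nonvanishing differential. -/
def HasSmoothBoundary {N : ℕ} (Ω : Set (Euc N)) : Prop :=
  ∀ x ∈ frontier Ω, ∃ g : Euc N → ℝ, ContDiff ℝ (⊤ : ℕ∞) g ∧ fderiv ℝ g x ≠ 0 ∧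
    ∀ᶠ y in nhds x, (y ∈ Ω ↔ g y < 0)

/-- The standard basis of `ℝ × ℝ^N`: the `d`-direction followed by the `τ`-directions. -/
def basisVec (N : ℕ) : Fin (N + 1) → ℝ × Euc N :=
  Fin.cases ((1 : ℝ), 0) (fun i => ((0 : ℝ), EuclideanSpace.single i (1 : ℝ)))

open Topology ContinuousLinearMap

section SeparatedRadial

variable {E : Type*} [NormedAddCommGroup E] [InnerProductSpace ℝ E] {g u v : ℝ → ℝ} {d : ℝ}

def separatedRadial (g u v : ℝ → ℝ) (q : ℝ × E) : ℝ := g (‖q.2‖ ^ 2) * u q.1 + v q.1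

variable (E) in
def innerSnd : ℝ × E →L[ℝ] ℝ × E →L[ℝ] ℝ := (innerSL ℝ).bilinearComp (snd ℝ ℝ E) (snd ℝ ℝ E)

@[simp] lemma innerSnd_apply (w z : ℝ × E) : innerSnd E w z = inner ℝ w.2 z.2 := rfl

lemma innerSnd_mk_zero (d : ℝ) : innerSnd E (d, (0 : E)) = 0 := by
  ext w <;> simp

theorem hasFDerivAt_separatedRadial {g' u' v' : ℝ} {τ : E} (hg : HasDerivAt g g' (‖τ‖ ^ 2))
    (hu : HasDerivAt u u' d) (hv : HasDerivAt v v' d) :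
    HasFDerivAt (separatedRadial g u v)
      ((g (‖τ‖ ^ 2) * u' + v') • fst ℝ ℝ E + (2 * g' * u d) • innerSnd E (d, τ)) (d, τ) := by
  have hs := (hasFDerivAt_snd (p := (d, τ))).norm_sq
  have hfst := hasFDerivAt_fst (𝕜 := ℝ) (p := ((d, τ) : ℝ × E))
  refine (((hg.comp_hasFDerivAt (d, τ) hs).mul (hu.comp_hasFDerivAt (d, τ) hfst)).add
    (hv.comp_hasFDerivAt (d, τ) hfst)).congr_fderiv ?_
  ext w
  · simp
  · simp only [Function.comp_apply, add_comp, smul_comp, fst_comp_inr, smul_zero, zero_add,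
      add_zero, smul_apply, comp_apply, inr_apply, coe_snd', coe_innerSL_apply, nsmul_eq_mul,
      Nat.cast_ofNat, smul_eq_mul, innerSnd_apply]
    ring

theorem fderiv_separatedRadial_zero {g' u' v' : ℝ} (hg : HasDerivAt g g' 0)
    (hu : HasDerivAt u u' d) (hv : HasDerivAt v v' d) :
    fderiv ℝ (separatedRadial g u v) (d, (0 : E)) = (g 0 * u' + v') • fst ℝ ℝ E := by
  have := hasFDerivAt_separatedRadial (τ := (0 : E)) (by simpa using hg) hu hv
  simpa [innerSnd_mk_zero] using this.fderiv

theorem hasFDerivAt_fderiv_separatedRadial {g' u' v' : ℝ → ℝ} {u'' v'' : ℝ}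
    (hg : ∀ᶠ s in 𝓝 0, HasDerivAt g (g' s) s) (hg' : DifferentiableAt ℝ g' 0)
    (hu : ∀ᶠ x in 𝓝 d, HasDerivAt u (u' x) x) (hu' : HasDerivAt u' u'' d)
    (hv : ∀ᶠ x in 𝓝 d, HasDerivAt v (v' x) x) (hv' : HasDerivAt v' v'' d) :
    HasFDerivAt (fderiv ℝ (separatedRadial g u v))
      (((g 0 * u'' + v'') • fst ℝ ℝ E).smulRight (fst ℝ ℝ E) +
        (2 * g' 0 * u d) • innerSnd E)
      (d, 0) := by
  have hsq : Tendsto (fun q : ℝ × E => ‖q.2‖ ^ 2) (𝓝 (d, 0)) (𝓝 0) :=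
    (by fun_prop : Continuous fun q : ℝ × E => ‖q.2‖ ^ 2).tendsto' _ _ (by simp)
  have hfst : Tendsto (fun q : ℝ × E => q.1) (𝓝 (d, 0)) (𝓝 d) := continuous_fst.tendsto _
  have hderiv : fderiv ℝ (separatedRadial g u v) =ᶠ[𝓝 (d, 0)] fun q =>
      (g (‖q.2‖ ^ 2) * u' q.1 + v' q.1) • fst ℝ ℝ E +
        (2 * g' (‖q.2‖ ^ 2) * u q.1) • innerSnd E q := by
    filter_upwards [hsq.eventually hg, hfst.eventually hu, hfst.eventually hv] with q hgq huq hvq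
    exact (hasFDerivAt_separatedRadial (d := q.1) (τ := q.2) hgq huq hvq).fderiv
  have hfirst :=
    hasFDerivAt_separatedRadial (τ := (0 : E)) (by simpa using hg.self_of_nhds) hu' hv'
  rw [innerSnd_mk_zero, smul_zero, add_zero] at hfirst
  have hsecond :
      DifferentiableAt ℝ (fun q : ℝ × E => 2 * g' (‖q.2‖ ^ 2) * u q.1) (d, 0) := by
    have hg'0 : DifferentiableAt ℝ g' (‖((d, 0) : ℝ × E).2‖ ^ 2) := by simpa using hg'
    exact ((hg'0.comp (d, 0) (differentiableAt_snd.norm_sq ℝ)).const_mul 2).mul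
      (hu.self_of_nhds.differentiableAt.comp (d, 0) differentiableAt_fst)
  -- instance search does not find this one by itself
  have : IsBoundedSMul ℝ (ℝ × E →L[ℝ] ℝ) :=
    NormedSpace.toIsBoundedSMul (𝕜 := ℝ) (E := ℝ × E →L[ℝ] ℝ)
  refine ((hfirst.smul_const (fst ℝ ℝ E)).add (hsecond.hasFDerivAt.smul
    (innerSnd E).hasFDerivAt)).congr_of_eventuallyEq hderiv |>.congr_fderiv ?_
  simp [innerSnd_mk_zero]

theorem iteratedFDeriv_two_separatedRadial_zero {g' u' v' : ℝ → ℝ} {u'' v'' : ℝ}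
    (hg : ∀ᶠ s in 𝓝 0, HasDerivAt g (g' s) s) (hg' : DifferentiableAt ℝ g' 0)
    (hu : ∀ᶠ x in 𝓝 d, HasDerivAt u (u' x) x) (hu' : HasDerivAt u' u'' d)
    (hv : ∀ᶠ x in 𝓝 d, HasDerivAt v (v' x) x) (hv' : HasDerivAt v' v'' d) (w z : ℝ × E) :
    iteratedFDeriv ℝ 2 (separatedRadial g u v) (d, 0) ![w, z] =
      (g 0 * u'' + v'') * (w.1 * z.1) + 2 * g' 0 * u d * inner ℝ w.2 z.2 := by
  rw [iteratedFDeriv_two_apply,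
    (hasFDerivAt_fderiv_separatedRadial (E := E) hg hg' hu hu' hv hv').fderiv]
  simp only [Matrix.cons_val_zero, Matrix.cons_val_one, Matrix.cons_val_fin_one, add_apply,
    smulRight_apply, smul_apply, coe_fst', smul_eq_mul, innerSnd_apply]
  ring

end SeparatedRadial

lemma hasDerivAt_affine_mul_one_add_rpow (a b c p : ℝ) {s : ℝ} (hs : -1 < s) :
    HasDerivAt (fun s => a * (b * s + c) * (1 + s) ^ p)
      (a * b * (1 + s) ^ p + a * (b * s + c) * (p * (1 + s) ^ (p - 1))) s := by
  have hbase : HasDerivAt (fun s : ℝ => 1 + s) 1 s := (hasDerivAt_id s).const_add 1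
  exact (((((hasDerivAt_id s).const_mul b).add_const c).const_mul a).mul
    (hbase.rpow_const (p := p) (Or.inl (by linarith)))).congr_deriv
    (by simp only [id, mul_one, one_mul])

lemma eventually_hasDerivAt_rpow_const {d : ℝ} (hd : 0 < d) (p : ℝ) :
    ∀ᶠ x in 𝓝 d, HasDerivAt (fun x => x ^ p) (p * x ^ (p - 1)) x :=
  eventually_of_mem (Ioi_mem_nhds hd) fun _ hx => Real.hasDerivAt_rpow_const (Or.inl (ne_of_gt hx))

section ReducedEnergy

variable {E : Type*} [NormedAddCommGroup E] [InnerProductSpace ℝ E] {n A B d : ℝ}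

def reducedEnergy (n A B : ℝ) : ℝ × E → ℝ :=
  separatedRadial (fun s => A * (2 * s + n) * (1 + s) ^ (-(n - 2))) (fun x => x ^ (-(n - 2)))
    (fun x => B * x ^ (n - 4))

theorem fderiv_reducedEnergy (hd : 0 < d) :
    fderiv ℝ (reducedEnergy n A B) (d, (0 : E)) =
      (A * n * (-(n - 2) * d ^ (-(n - 2) - 1)) + B * ((n - 4) * d ^ (n - 4 - 1))) •
        fst ℝ ℝ E := by
  have := fderiv_separatedRadial_zero (E := E)
    (hasDerivAt_affine_mul_one_add_rpow A 2 n (-(n - 2)) (by norm_num : (-1 : ℝ) < 0))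
    (Real.hasDerivAt_rpow_const (p := -(n - 2)) (Or.inl hd.ne'))
    ((Real.hasDerivAt_rpow_const (p := n - 4) (Or.inl hd.ne')).const_mul B)
  simpa only [reducedEnergy, mul_zero, zero_add, add_zero, Real.one_rpow, mul_one] using this

theorem iteratedFDeriv_two_reducedEnergy (hd : 0 < d) (w z : ℝ × E) :
    iteratedFDeriv ℝ 2 (reducedEnergy n A B) (d, 0) ![w, z] =
      (A * n * (-(n - 2) * ((-(n - 2) - 1) * d ^ (-(n - 2) - 1 - 1))) +
          B * ((n - 4) * ((n - 4 - 1) * d ^ (n - 4 - 1 - 1)))) * (w.1 * z.1) +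
        2 * (A * 2 + A * n * (-(n - 2))) * d ^ (-(n - 2)) * inner ℝ w.2 z.2 := by
  have hg := eventually_of_mem (Ioi_mem_nhds (by norm_num : (-1 : ℝ) < 0)) fun s hs =>
    hasDerivAt_affine_mul_one_add_rpow A 2 n (-(n - 2)) hs
  have hg' : DifferentiableAt ℝ (fun s : ℝ => A * 2 * (1 + s) ^ (-(n - 2)) +
      A * (2 * s + n) * (-(n - 2) * (1 + s) ^ (-(n - 2) - 1))) 0 := by
    fun_prop (disch := norm_num)
  have hv := (eventually_hasDerivAt_rpow_const hd (n - 4)).mono fun _ h => h.const_mul B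
  have hu' := (Real.hasDerivAt_rpow_const (p := -(n - 2) - 1) (Or.inl hd.ne')).const_mul (-(n - 2))
  have hv' := ((Real.hasDerivAt_rpow_const (p := n - 4 - 1) (Or.inl hd.ne')).const_mul
    (n - 4)).const_mul B
  simpa only [reducedEnergy, mul_zero, zero_add, add_zero, Real.one_rpow, mul_one] using
    iteratedFDeriv_two_separatedRadial_zero hg hg'
      (eventually_hasDerivAt_rpow_const hd (-(n - 2))) hu' hv hv' w z

end ReducedEnergy

section CriticalRadius

variable {n A B d : ℝ}

lemma critical_ratio_pos (hn : 4 < n) (hA : 0 < A) (hB : 0 < B) :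
    0 < n * (n - 2) * A / ((n - 4) * B) := by
  have : 0 < n - 4 := by linarith
  have : 0 < n - 2 := by linarith
  positivity

theorem energy_radial_deriv_eq_zero (hn : 4 < n) (hA : 0 < A) (hB : 0 < B)
    (hd : d = (n * (n - 2) * A / ((n - 4) * B)) ^ (1 / (2 * (n - 3)))) :
    A * n * (-(n - 2) * d ^ (-(n - 2) - 1)) + B * ((n - 4) * d ^ (n - 4 - 1)) = 0 := by
  have hbase := critical_ratio_pos hn hA hB
  have hpow : d ^ (2 * (n - 3)) = n * (n - 2) * A / ((n - 4) * B) := by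
    rw [hd, ← Real.rpow_mul hbase.le, one_div_mul_cancel (by linarith), Real.rpow_one]
  have hsplit : d ^ (n - 4 - 1) = d ^ (2 * (n - 3)) * d ^ (-(n - 2) - 1) := by
    rw [← Real.rpow_add (hd ▸ Real.rpow_pos_of_pos hbase _)]
    ring_nf
  have hn4 : n - 4 ≠ 0 := by linarith
  rw [hsplit, hpow]
  field_simp
  ring

theorem energy_radial_second_deriv_pos (hn : 5 ≤ n) (hA : 0 < A) (hB : 0 ≤ B) (hd : 0 < d) :
    0 < A * n * (-(n - 2) * ((-(n - 2) - 1) * d ^ (-(n - 2) - 1 - 1))) +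
      B * ((n - 4) * ((n - 4 - 1) * d ^ (n - 4 - 1 - 1))) := by
  have h1 : 0 < A * n * ((n - 2) * (n - 1)) * d ^ (-(n - 2) - 1 - 1) :=
    mul_pos (mul_pos (by positivity) (mul_pos (by linarith) (by linarith))) (by positivity)
  have h2 : 0 ≤ B * ((n - 4) * (n - 5)) * d ^ (n - 4 - 1 - 1) :=
    mul_nonneg (mul_nonneg hB (mul_nonneg (by linarith) (by linarith))) (by positivity)
  linarith

theorem energy_transversal_second_deriv_neg (hn : 3 ≤ n) (hA : 0 < A) (hd : 0 < d) :
    2 * (A * 2 + A * n * (-(n - 2))) * d ^ (-(n - 2)) < 0 := by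
  have hn2 : 3 ≤ n * (n - 2) := by nlinarith
  have hslope : A * 2 + A * n * (-(n - 2)) < 0 := by
    nlinarith [mul_le_mul_of_nonneg_left hn2 hA.le]
  exact mul_neg_of_neg_of_pos (by linarith) (Real.rpow_pos_of_pos hd _)

end CriticalRadius

theorem det_gram_basisVec {N : ℕ} (f : ℝ × Euc N → ℝ × Euc N → ℝ) (a b : ℝ)
    (hf : ∀ w z, f w z = a * (w.1 * z.1) + b * inner ℝ w.2 z.2) :
    (Matrix.of fun i j => f (basisVec N i) (basisVec N j)).det = a * b ^ N := by
  have hdiag : (Matrix.of fun i j => f (basisVec N i) (basisVec N j)) =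
      Matrix.diagonal (Fin.cases a fun _ => b) := by
    ext i j
    cases i using Fin.cases <;> cases j using Fin.cases <;>
      simp [hf, basisVec, Matrix.diagonal_apply, EuclideanSpace.inner_single_left,
        (Fin.succ_ne_zero _).symm]
  simp [hdiag, Fin.prod_univ_succ]

theorem statement5 (N : ℕ) (hN : 5 ≤ N) (A B : ℝ) (hA : 0 < A) (hB : 0 < B)
    (Ψ : ℝ × Euc N → ℝ)
    (hΨ : ∀ q : ℝ × Euc N, Ψ q =
      A * (2 * ‖q.2‖ ^ 2 + N) * (1 + ‖q.2‖ ^ 2) ^ (-((N : ℝ) - 2)) * q.1 ^ (-((N : ℝ) - 2)) +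
        B * q.1 ^ ((N : ℝ) - 4))
    (dstar : ℝ)
    (hdstar : dstar = ((N : ℝ) * ((N : ℝ) - 2) * A / (((N : ℝ) - 4) * B)) ^
      (1 / (2 * ((N : ℝ) - 3)))) :
    fderiv ℝ Ψ (dstar, 0) = 0 ∧
    Matrix.det (Matrix.of fun i j : Fin (N + 1) =>
      iteratedFDeriv ℝ 2 Ψ (dstar, 0) ![basisVec N i, basisVec N j]) ≠ 0 ∧
    0 < iteratedFDeriv ℝ 2 Ψ (dstar, 0) ![basisVec N 0, basisVec N 0] ∧
    (∀ i : Fin N,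
      iteratedFDeriv ℝ 2 Ψ (dstar, 0) ![basisVec N i.succ, basisVec N i.succ] < 0) ∧
    (∀ i : Fin N,
      iteratedFDeriv ℝ 2 Ψ (dstar, 0) ![basisVec N 0, basisVec N i.succ] = 0) := by
  have hN' : (5 : ℝ) ≤ N := by exact_mod_cast hN
  have hΨ' : Ψ = reducedEnergy N A B := funext hΨ
  have hd : 0 < dstar := hdstar ▸ Real.rpow_pos_of_pos (critical_ratio_pos (by linarith) hA hB) _
  have hdd := energy_radial_second_deriv_pos hN' hA hB.le hd
  have hττ := energy_transversal_second_deriv_neg (n := N) (by linarith) hA hd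
  have hhess := iteratedFDeriv_two_reducedEnergy (E := Euc N) (n := N) (A := A) (B := B) hd
  rw [← hΨ'] at hhess
  refine ⟨?_, ?_, ?_, fun i => ?_, fun i => ?_⟩
  · rw [hΨ', fderiv_reducedEnergy hd, energy_radial_deriv_eq_zero (by linarith) hA hB hdstar,
      zero_smul]
  · rw [det_gram_basisVec _ _ _ hhess]
    exact mul_ne_zero hdd.ne' (pow_ne_zero _ hττ.ne)
  · simpa [hhess, basisVec] using hdd
  · simpa [hhess, basisVec] using hττ
  · simp [hhess, basisVec]
end
end

section
/- Let N ≥ 5 be an integer, p := (N+4)/(N−4), α_N := (N(N−4)(N−2)(N+2))^{(N−4)/8}. For every μ > 0 and ξ ∈ ℝ^N, the function U_{μ,ξ}(x) := α_N (μ/(μ² + |x−ξ|²))^{(N−4)/2} is smooth and strictly positive on ℝ^N and satisfies Δ(ΔU_{μ,ξ})(x) = U_{μ,ξ}(x)^p for every x ∈ ℝ^N. -/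
open scoped ENNReal
open MeasureTheory Filter Metric Set

noncomputable section

/-!
With `X = μ² + |x - ξ|²`, the bubble is `c · X ^ e` for `e = (4 - N) / 2` and a constant `c`.
For a profile `F` of `r = |x - ξ|²` the Laplacian is `Δ F(r) = 4 r F''(r) + 2 N F'(r)`, so
`Δ X ^ e = e (2N + 4(e - 1)) X ^ (e - 1) - 4 μ² e (e - 1) X ^ (e - 2)`. Applying this twice,
at the critical `e` everything but the last term cancels:
`Δ² X ^ e = 16 μ⁴ e (e - 1) (e - 2) (e - 3) X ^ (e - 4) = N (N - 4) (N - 2) (N + 2) μ⁴ X ^ (e - 4)`.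
Since `e · p = e - 4`, this matches `U ^ p` exactly when
`α_N ^ (p - 1) = N (N - 4) (N - 2) (N + 2)`, which is the choice of `α_N`.
-/

lemma iteratedDeriv_two_comp_quadratic {F F' F'' : ℝ → ℝ} {s a : ℝ}
    (hF : ∀ t, HasDerivAt F (F' (s + 2 * a * t + t ^ 2)) (s + 2 * a * t + t ^ 2))
    (hF' : HasDerivAt F' (F'' s) s) :
    iteratedDeriv 2 (fun t => F (s + 2 * a * t + t ^ 2)) 0 = 4 * a ^ 2 * F'' s + 2 * F' s := by
  have hq : ∀ t : ℝ, HasDerivAt (fun t => s + 2 * a * t + t ^ 2) (2 * a + 2 * t) t := fun t => by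
    simpa using (((hasDerivAt_id t).const_mul (2 * a)).const_add s).fun_add (hasDerivAt_pow 2 t)
  have hd : deriv (fun t => F (s + 2 * a * t + t ^ 2))
      = fun t => F' (s + 2 * a * t + t ^ 2) * (2 * a + 2 * t) :=
    funext fun t => ((hF t).comp t (hq t)).deriv
  have hd2 : HasDerivAt (fun t => F' (s + 2 * a * t + t ^ 2) * (2 * a + 2 * t))
      (F'' s * (2 * a + 2 * 0) * (2 * a + 2 * 0) + F' (s + 2 * a * 0 + 0 ^ 2) * 2) 0 := by
    refine (hF'.comp_of_eq 0 (hq 0) (by ring)).mul ?_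
    simpa using ((hasDerivAt_id (0 : ℝ)).const_mul 2).const_add (2 * a)
  rw [iteratedDeriv_succ, iteratedDeriv_one, hd, hd2.deriv]
  simp only [mul_zero, add_zero, zero_pow two_ne_zero]
  ring

section

variable {N : ℕ}

lemma lap_const_mul (c : ℝ) (f : Euc N → ℝ) (x : Euc N) :
    lap (fun y => c * f y) x = c * lap f x := by
  simp only [lap, iteratedDeriv_const_mul_field, Finset.mul_sum]

lemma contDiffAt_comp_line {n : WithTop ℕ∞} {f : Euc N → ℝ} {x : Euc N} (hf : ContDiffAt ℝ n f x)
    (v : Euc N) : ContDiffAt ℝ n (fun t : ℝ => f (x + t • v)) 0 := by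
  have hline : ContDiffAt ℝ n (fun t : ℝ => x + t • v) 0 := by fun_prop
  exact (by simpa using hf : ContDiffAt ℝ n f (x + (0 : ℝ) • v)).comp 0 hline

lemma lap_add {f g : Euc N → ℝ} {x : Euc N} (hf : ContDiffAt ℝ 2 f x) (hg : ContDiffAt ℝ 2 g x) :
    lap (fun y => f y + g y) x = lap f x + lap g x := by
  simp only [lap, ← Finset.sum_add_distrib]
  refine Finset.sum_congr rfl fun i _ => ?_
  exact iteratedDeriv_fun_add (contDiffAt_comp_line hf _) (contDiffAt_comp_line hg _)

lemma bilap_const_mul (c : ℝ) (f : Euc N → ℝ) (x : Euc N) :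
    bilap (fun y => c * f y) x = c * bilap f x := by
  simp only [bilap, funext (lap_const_mul c f), lap_const_mul]

lemma norm_add_smul_single_sq (v : Euc N) (i : Fin N) (t : ℝ) :
    ‖v + t • EuclideanSpace.single i (1 : ℝ)‖ ^ 2 = ‖v‖ ^ 2 + 2 * v i * t + t ^ 2 := by
  rw [norm_add_sq_real, real_inner_smul_right, EuclideanSpace.inner_single_right, norm_smul]
  simp only [Real.ringHom_apply, one_mul, Real.norm_eq_abs, PiLp.norm_single, norm_one, mul_one,
    sq_abs]
  ring

theorem lap_comp_norm_sub_sq {F F' F'' : ℝ → ℝ} (hF : ∀ r, 0 ≤ r → HasDerivAt F (F' r) r)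
    (hF' : ∀ r, 0 ≤ r → HasDerivAt F' (F'' r) r) (ξ x : Euc N) :
    lap (fun y => F (‖y - ξ‖ ^ 2)) x
      = 4 * ‖x - ξ‖ ^ 2 * F'' (‖x - ξ‖ ^ 2) + 2 * N * F' (‖x - ξ‖ ^ 2) := by
  set v := x - ξ
  have hline : ∀ i : Fin N, iteratedDeriv 2
      (fun t : ℝ => F (‖x + t • EuclideanSpace.single i (1 : ℝ) - ξ‖ ^ 2)) 0
        = 4 * v i ^ 2 * F'' (‖v‖ ^ 2) + 2 * F' (‖v‖ ^ 2) := fun i => by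
    have hq : ∀ t : ℝ, ‖x + t • EuclideanSpace.single i (1 : ℝ) - ξ‖ ^ 2
        = ‖v‖ ^ 2 + 2 * v i * t + t ^ 2 := fun t => by
      rw [add_sub_right_comm, norm_add_smul_single_sq]
    simp only [hq]
    refine iteratedDeriv_two_comp_quadratic (fun t => hF _ ?_) (hF' _ (sq_nonneg _))
    rw [← norm_add_smul_single_sq]
    positivity
  simp only [lap, hline, Finset.sum_add_distrib, ← Finset.mul_sum, ← Finset.sum_mul,
    EuclideanSpace.real_norm_sq_eq v, Finset.sum_const, Finset.card_univ, Fintype.card_fin,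
    nsmul_eq_mul]
  ring

lemma lap_rpow_norm_sub_sq {b : ℝ} (hb : 0 < b) (e : ℝ) (ξ x : Euc N) :
    lap (fun y => (b + ‖y - ξ‖ ^ 2) ^ e) x
      = e * (2 * N + 4 * (e - 1)) * (b + ‖x - ξ‖ ^ 2) ^ (e - 1)
        + -4 * b * e * (e - 1) * (b + ‖x - ξ‖ ^ 2) ^ (e - 2) := by
  have hpos : ∀ r : ℝ, 0 ≤ r → b + r ≠ 0 := fun r hr => by positivity
  have hderiv : ∀ (e r : ℝ), 0 ≤ r → HasDerivAt (fun r => (b + r) ^ e) (e * (b + r) ^ (e - 1)) r :=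
    fun e r hr => by
      simpa using ((hasDerivAt_id r).const_add b).rpow_const (p := e) (Or.inl (hpos r hr))
  rw [lap_comp_norm_sub_sq (hderiv e) (fun r hr => (hderiv (e - 1) r hr).const_mul e) ξ x]
  have hX : b + ‖x - ξ‖ ^ 2 ≠ 0 := hpos _ (sq_nonneg _)
  have hsplit : (b + ‖x - ξ‖ ^ 2) ^ (e - 1) = (b + ‖x - ξ‖ ^ 2) ^ (e - 2) * (b + ‖x - ξ‖ ^ 2) := by
    rw [show e - 1 = e - 2 + 1 by ring, Real.rpow_add_one hX]
  rw [show e - 1 - 1 = e - 2 by ring, hsplit]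
  ring

lemma contDiff_rpow_norm_sub_sq {n : WithTop ℕ∞} {b : ℝ} (hb : 0 < b) (e : ℝ) (ξ : Euc N) :
    ContDiff ℝ n (fun y : Euc N => (b + ‖y - ξ‖ ^ 2) ^ e) :=
  contDiff_iff_contDiffAt.2 fun y =>
    (contDiff_const.add ((contDiff_id.sub contDiff_const).norm_sq ℝ)).contDiffAt.rpow_const_of_ne
      (by positivity)

theorem bilap_rpow_norm_sub_sq {b : ℝ} (hb : 0 < b) (ξ x : Euc N) :
    bilap (fun y => (b + ‖y - ξ‖ ^ 2) ^ ((4 - N : ℝ) / 2)) x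
      = N * (N - 4) * (N - 2) * (N + 2) * b ^ 2 * (b + ‖x - ξ‖ ^ 2) ^ ((4 - N : ℝ) / 2 - 4) := by
  set e : ℝ := (4 - N) / 2 with he
  have hP : ∀ e : ℝ, ContDiffAt ℝ 2 (fun y : Euc N => (b + ‖y - ξ‖ ^ 2) ^ e) x := fun e =>
    (contDiff_rpow_norm_sub_sq hb e ξ).contDiffAt
  rw [bilap, funext (lap_rpow_norm_sub_sq hb e ξ),
    lap_add (contDiffAt_const.mul (hP _)) (contDiffAt_const.mul (hP _)), lap_const_mul,
    lap_const_mul, lap_rpow_norm_sub_sq hb, lap_rpow_norm_sub_sq hb]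
  -- At `e = (4 - N) / 2` the `X ^ (e - 2)` term has coefficient `2N + 4(e - 2) = 0`,
  -- and the two `X ^ (e - 3)` terms cancel.
  rw [show e - 1 - 1 = e - 2 by ring, show e - 1 - 2 = e - 3 by ring,
    show e - 2 - 1 = e - 3 by ring, show e - 2 - 2 = e - 4 by ring, he]
  ring

lemma alphaN_base_pos (hN : 4 < N) : 0 < (N : ℝ) * (N - 4) * (N - 2) * (N + 2) := by
  have hN' : (4 : ℝ) < N := by exact_mod_cast hN
  have : (0 : ℝ) < N - 4 := by linarith
  have : (0 : ℝ) < N - 2 := by linarith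
  positivity

lemma alphaN_pos (hN : 4 < N) : 0 < alphaN N :=
  Real.rpow_pos_of_pos (alphaN_base_pos hN) _

lemma rpow_div_mul_critExp (hN : N ≠ 4) {y : ℝ} (hy : 0 ≤ y) (k : ℝ) :
    (y ^ ((N - 4 : ℝ) / k)) ^ critExp N = y ^ ((N + 4 : ℝ) / k) := by
  have hN' : (N : ℝ) - 4 ≠ 0 := sub_ne_zero.2 (by exact_mod_cast hN)
  rw [← Real.rpow_mul hy, critExp]
  congr 1
  field_simp

lemma alphaN_rpow_critExp (hN : 4 < N) :
    alphaN N ^ critExp N = N * (N - 4) * (N - 2) * (N + 2) * alphaN N := by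
  have hK := alphaN_base_pos hN
  rw [alphaN, rpow_div_mul_critExp hN.ne' hK.le, show (N + 4 : ℝ) / 8 = (N - 4) / 8 + 1 by ring,
    Real.rpow_add_one hK.ne']
  ring

lemma bubble_eq_mul_rpow {μ : ℝ} (hμ : 0 ≤ μ) (ξ : Euc N) :
    bubble N μ ξ
      = fun x => alphaN N * μ ^ ((N - 4 : ℝ) / 2) * (μ ^ 2 + ‖x - ξ‖ ^ 2) ^ ((4 - N : ℝ) / 2) := by
  funext x
  rw [bubble, Real.div_rpow hμ (by positivity), div_eq_mul_inv, ← Real.rpow_neg (by positivity),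
    ← neg_div, neg_sub, mul_assoc]

lemma bubble_rpow_critExp (hN : 4 < N) {μ : ℝ} (hμ : 0 < μ) (ξ x : Euc N) :
    bubble N μ ξ x ^ critExp N
      = N * (N - 4) * (N - 2) * (N + 2) * (μ / (μ ^ 2 + ‖x - ξ‖ ^ 2)) ^ 4 * bubble N μ ξ x := by
  have hq : 0 < μ / (μ ^ 2 + ‖x - ξ‖ ^ 2) := by positivity
  rw [bubble, Real.mul_rpow (alphaN_pos hN).le (Real.rpow_nonneg hq.le _), alphaN_rpow_critExp hN,
    rpow_div_mul_critExp hN.ne' hq.le,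
    show (N + 4 : ℝ) / 2 = (N - 4) / 2 + (4 : ℕ) by push_cast; ring, Real.rpow_add_natCast hq.ne']
  ring

end

theorem statement6 (N : ℕ) (hN : 5 ≤ N) (μ : ℝ) (hμ : 0 < μ) (ξ : Euc N) :
    ContDiff ℝ (⊤ : ℕ∞) (bubble N μ ξ) ∧ (∀ x : Euc N, 0 < bubble N μ ξ x) ∧
      ∀ x : Euc N, bilap (bubble N μ ξ) x = bubble N μ ξ x ^ critExp N := by
  have hN' : 4 < N := hN
  have hb : 0 < μ ^ 2 := by positivity
  have hU := bubble_eq_mul_rpow (N := N) hμ.le ξ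
  refine ⟨?_, fun x => ?_, fun x => ?_⟩
  · rw [hU]
    exact contDiff_const.mul (contDiff_rpow_norm_sub_sq hb _ ξ)
  · have hα := alphaN_pos hN'
    rw [bubble]
    positivity
  · have hX : μ ^ 2 + ‖x - ξ‖ ^ 2 ≠ 0 := by positivity
    have h4 := Real.rpow_sub_natCast hX ((4 - N : ℝ) / 2) 4
    rw [Nat.cast_ofNat] at h4
    rw [bubble_rpow_critExp hN' hμ, hU, bilap_const_mul, bilap_rpow_norm_sub_sq hb, h4]
    field_simp
end
end
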